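/- arXiv:1001.0472 — 4 statements merged into one kernel-verified Lean document; each statement's English description precedes it below -/
import Mathlib

section
/- For every prime ideal Q of B not containing J, the set Q̄^f := {(a, f(a)+j) | a ∈ A, j ∈ J, f(a)+j ∈ Q} is a prime ideal of A ⋈^f J not containing {0} × J. -/
variable {A B : Type*} [CommRing A] [CommRing B]

/-- The amalgamation `A ⋈^f J = {(a, f a + j) | a ∈ A, j ∈ J}` as a subring of `A × B`. -/
def amalg (f : A →+* B) (J : Ideal B) : Subring (A × B) where
  carrier := {p : A × B | ∃ a : A, ∃ j ∈ J, p = (a, f a + j)}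
  zero_mem' := ⟨0, 0, J.zero_mem, by ext <;> simp⟩
  one_mem' := ⟨1, 0, J.zero_mem, by ext <;> simp⟩
  add_mem' := by
    rintro _ _ ⟨a, j, hj, rfl⟩ ⟨a', j', hj', rfl⟩
    exact ⟨a + a', j + j', J.add_mem hj hj', by simp [Prod.ext_iff]; ring⟩
  neg_mem' := by
    rintro _ ⟨a, j, hj, rfl⟩
    exact ⟨-a, -j, J.neg_mem hj, by simp [Prod.ext_iff]; ring⟩
  mul_mem' := by
    rintro _ _ ⟨a, j, hj, rfl⟩ ⟨a', j', hj', rfl⟩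
    refine ⟨a * a', f a * j' + j * f a' + j * j', ?_, by simp [Prod.ext_iff]; ring⟩
    exact J.add_mem (J.add_mem (J.mul_mem_left _ hj') (J.mul_mem_right _ hj))
      (J.mul_mem_right _ hj)

/-- The subring `f(A) + J` of `B`. -/
def fAJ (f : A →+* B) (J : Ideal B) : Subring B where
  carrier := {b : B | ∃ a : A, ∃ j ∈ J, b = f a + j}
  zero_mem' := ⟨0, 0, J.zero_mem, by simp⟩
  one_mem' := ⟨1, 0, J.zero_mem, by simp⟩
  add_mem' := by
    rintro _ _ ⟨a, j, hj, rfl⟩ ⟨a', j', hj', rfl⟩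
    exact ⟨a + a', j + j', J.add_mem hj hj', by simp; ring⟩
  neg_mem' := by
    rintro _ ⟨a, j, hj, rfl⟩
    exact ⟨-a, -j, J.neg_mem hj, by simp; ring⟩
  mul_mem' := by
    rintro _ _ ⟨a, j, hj, rfl⟩ ⟨a', j', hj', rfl⟩
    refine ⟨a * a', f a * j' + j * f a' + j * j', ?_, by simp; ring⟩
    exact J.add_mem (J.add_mem (J.mul_mem_left _ hj') (J.mul_mem_right _ hj))
      (J.mul_mem_right _ hj)

/-!
`Q̄^f` is the contraction of `Q` along the projection `A ⋈^f J → B`, `(a, b) ↦ b`, hence prime;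
an element `(0, j)` with `j ∈ J \ Q` lies outside it.
-/

namespace amalg

variable (f : A →+* B) (J : Ideal B)

def snd : amalg f J →+* B := (RingHom.snd A B).comp (amalg f J).subtype

@[simp]
theorem snd_apply (x : amalg f J) : snd f J x = (x : A × B).2 := rfl

theorem zero_prod_mem {j : B} (hj : j ∈ J) : ((0 : A), j) ∈ amalg f J :=
  ⟨0, j, hj, by simp⟩

theorem coe_comap_snd (Q : Ideal B) :
    (Q.comap (snd f J) : Set (amalg f J)) =
      {x : amalg f J | ∃ a : A, ∃ j ∈ J, f a + j ∈ Q ∧ (x : A × B) = (a, f a + j)} := by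
  ext ⟨x, a, j, hj, hx⟩
  simp only [SetLike.mem_coe, Ideal.mem_comap, snd_apply, Set.mem_ofPred_eq]
  constructor
  · intro hxQ
    exact ⟨a, j, hj, by rwa [hx] at hxQ, hx⟩
  · rintro ⟨a', j', -, hQ', rfl⟩
    exact hQ'

theorem zero_prod_not_subset_comap_snd {Q : Ideal B} (hJQ : ¬J ≤ Q) :
    ¬{x : amalg f J | ∃ j ∈ J, (x : A × B) = (0, j)} ⊆
      (Q.comap (snd f J) : Set (amalg f J)) := by
  obtain ⟨j, hjJ, hjQ⟩ := Set.not_subset.mp hJQ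
  intro hsub
  exact hjQ (hsub (a := ⟨(0, j), zero_prod_mem f J hjJ⟩) ⟨j, hjJ, rfl⟩)

end amalg

/-- For every prime ideal `Q` of `B` not containing `J`, the set
`Q̄^f = {(a, f a + j) | a ∈ A, j ∈ J, f a + j ∈ Q}` is a prime ideal of `A ⋈^f J`
not containing `{0} × J`. -/
theorem amalg_prime_of_prime_B (f : A →+* B) (J : Ideal B) (Q : Ideal B) (hQ : Q.IsPrime)
    (hJQ : ¬ J ≤ Q) :
    ∃ K : Ideal (amalg f J),
      (K : Set (amalg f J)) =
        {x : amalg f J | ∃ a : A, ∃ j ∈ J, f a + j ∈ Q ∧ (x : A × B) = (a, f a + j)} ∧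
      K.IsPrime ∧
      ¬ {x : amalg f J | ∃ j ∈ J, (x : A × B) = (0, j)} ⊆ (K : Set (amalg f J)) :=
  ⟨Q.comap (amalg.snd f J), amalg.coe_comap_snd f J Q, Ideal.comap_isPrime _ Q,
    amalg.zero_prod_not_subset_comap_snd f J hJQ⟩
end

section
/- For a prime ideal P of A, the ideal P ⋈^f J is a maximal ideal of A ⋈^f J if and only if P is a maximal ideal of A. -/
variable {A B : Type*} [CommRing A] [CommRing B]

theorem Ideal.isMaximal_comap_iff_of_surjective {R S : Type*} [CommRing R] [CommRing S]
    (g : R →+* S) (hg : Function.Surjective g) (I : Ideal S) :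
    (I.comap g).IsMaximal ↔ I.IsMaximal := by
  refine ⟨fun h => ?_, fun h => Ideal.comap_isMaximal_of_surjective g hg⟩
  have hI : I ≠ ⊤ := fun hI => h.ne_top (by rw [hI, Ideal.comap_top])
  simpa [Ideal.map_comap_of_surjective g hg, hI] using
    Ideal.map_eq_top_or_isMaximal_of_surjective g hg h

def amalgFst (f : A →+* B) (J : Ideal B) : amalg f J →+* A :=
  (RingHom.fst A B).comp (amalg f J).subtype

theorem amalgFst_surjective (f : A →+* B) (J : Ideal B) :
    Function.Surjective (amalgFst f J) :=
  fun a => ⟨⟨(a, f a), a, 0, J.zero_mem, by simp⟩, rfl⟩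

theorem amalg_ideal_eq_comap_amalgFst (f : A →+* B) (J : Ideal B) (P : Ideal A)
    (K : Ideal (amalg f J))
    (hK : (K : Set (amalg f J)) =
      {x : amalg f J | ∃ p ∈ P, ∃ j ∈ J, (x : A × B) = (p, f p + j)}) :
    K = P.comap (amalgFst f J) := by
  ext x
  obtain ⟨a, j, hj, hx⟩ := x.2
  change x ∈ (K : Set (amalg f J)) ↔ (x : A × B).1 ∈ P
  rw [hK, Set.mem_ofPred_eq, hx]
  constructor
  · rintro ⟨p, hp, _, _, hxp⟩
    rwa [(Prod.ext_iff.mp hxp).1]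
  · exact fun ha => ⟨a, ha, j, hj, rfl⟩

theorem amalg_maximal_iff_general (f : A →+* B) (J : Ideal B) (P : Ideal A)
    (K : Ideal (amalg f J))
    (hK : (K : Set (amalg f J)) =
      {x : amalg f J | ∃ p ∈ P, ∃ j ∈ J, (x : A × B) = (p, f p + j)}) :
    K.IsMaximal ↔ P.IsMaximal := by
  rw [amalg_ideal_eq_comap_amalgFst f J P K hK]
  exact Ideal.isMaximal_comap_iff_of_surjective _ (amalgFst_surjective f J) P

/-- For a prime ideal `P` of `A`, the ideal `P ⋈^f J` is maximal in `A ⋈^f J` iff `P` is maximal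
in `A`. -/
theorem amalg_maximal_iff (f : A →+* B) (J : Ideal B) (P : Ideal A) (hP : P.IsPrime)
    (K : Ideal (amalg f J))
    (hK : (K : Set (amalg f J)) =
      {x : amalg f J | ∃ p ∈ P, ∃ j ∈ J, (x : A × B) = (p, f p + j)}) :
    K.IsMaximal ↔ P.IsMaximal :=
  amalg_maximal_iff_general f J P K hK
end

section
/- The ideal f⁻¹(J) × J is the conductor of A ⋈^f J in A × B, i.e., it is the largest ideal of A × B contained in A ⋈^f J. -/
variable {A B : Type*} [CommRing A] [CommRing B]

theorem mem_amalg_iff {f : A →+* B} {J : Ideal B} {p : A × B} :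
    p ∈ amalg f J ↔ p.2 - f p.1 ∈ J := by
  constructor
  · rintro ⟨a, j, hj, rfl⟩
    simpa using hj
  · intro h
    exact ⟨p.1, p.2 - f p.1, h, by simp⟩

theorem prod_comap_subset_amalg (f : A →+* B) (J : Ideal B) :
    ((J.comap f).prod J : Set (A × B)) ⊆ amalg f J := by
  rintro ⟨a, b⟩ hab
  obtain ⟨ha, hb⟩ := (Ideal.mem_prod _ _).mp hab
  exact mem_amalg_iff.mpr (J.sub_mem hb ha)

/- Multiplying by the idempotent `(0, 1)` keeps us in `I`, and `(0, b) ∈ A ⋈^f J` means `b ∈ J`. -/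
theorem le_prod_comap_of_subset_amalg {f : A →+* B} {J : Ideal B} {I : Ideal (A × B)}
    (hI : (I : Set (A × B)) ⊆ amalg f J) : I ≤ (J.comap f).prod J := by
  rintro ⟨a, b⟩ hab
  have hb : b ∈ J := by
    have h0b : ((0 : A), b) ∈ I := by simpa using I.mul_mem_left (0, 1) hab
    simpa using mem_amalg_iff.mp (hI h0b)
  have hba : b - f a ∈ J := mem_amalg_iff.mp (hI hab)
  exact (Ideal.mem_prod _ _).mpr ⟨by simpa using J.sub_mem hb hba, hb⟩

/-- `f⁻¹(J) × J` is the conductor of `A ⋈^f J` in `A × B`: it is the largest ideal of `A × B`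
contained in `A ⋈^f J`. -/
theorem amalg_conductor (f : A →+* B) (J : Ideal B) :
    ∃ C : Ideal (A × B),
      (C : Set (A × B)) = (f ⁻¹' (J : Set B)) ×ˢ (J : Set B) ∧
      (C : Set (A × B)) ⊆ (amalg f J : Set (A × B)) ∧
      ∀ I : Ideal (A × B), (I : Set (A × B)) ⊆ (amalg f J : Set (A × B)) → I ≤ C :=
  ⟨(J.comap f).prod J, Ideal.coe_prod _ _, prod_comap_subset_amalg f J,
    fun _ => le_prod_comap_of_subset_amalg⟩
end

section
/- The subring f(A)+J of B is integral over f(A) if and only if A ⋈^f J is integral over its subring Γ(f) := {(a, f(a)) | a ∈ A}. -/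
variable {A B : Type*} [CommRing A] [CommRing B]

/- If `q` kills `f a + j` over `f`, then `q * (X - a)` kills `(a, f a + j)` over `Γ(f)`, one factor
vanishing in each coordinate; conversely the second projection sends an integral equation over
`Γ(f)` to one over `f(A)`. -/

theorem RingHom.IsIntegralElem.pair {R S T : Type*} [CommRing R] [CommRing S] [CommRing T]
    {φ : R →+* S × T} {x : S × T}
    (h₁ : ((RingHom.fst S T).comp φ).IsIntegralElem x.1)
    (h₂ : ((RingHom.snd S T).comp φ).IsIntegralElem x.2) : φ.IsIntegralElem x := by
  let _ : Algebra R S := ((RingHom.fst S T).comp φ).toAlgebra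
  let _ : Algebra R T := ((RingHom.snd S T).comp φ).toAlgebra
  -- the induced product algebra structure on `S × T` is `φ` itself, up to `Prod` eta
  exact IsIntegral.pair (R := R) h₁ h₂

/-- `f(A)+J` is integral over `f(A)` iff `A ⋈^f J` is integral over `Γ(f) = {(a, f a) | a ∈ A}`. -/
theorem amalg_integral_iff (f : A →+* B) (J : Ideal B) (ι : A →+* amalg f J)
    (hι : ∀ a : A, (ι a : A × B) = (a, f a)) :
    (∀ b ∈ fAJ f J, f.IsIntegralElem b) ↔ (∀ x : amalg f J, ι.IsIntegralElem x) := by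
  set ψ := (amalg f J).subtype
  have hfst : (RingHom.fst A B).comp (ψ.comp ι) = RingHom.id A := by
    ext a; exact congrArg Prod.fst (hι a)
  have hsnd : (RingHom.snd A B).comp (ψ.comp ι) = f := by
    ext a; exact congrArg Prod.snd (hι a)
  constructor
  · rintro H ⟨_, a, j, hj, rfl⟩
    rw [← RingHom.IsIntegralElem.map_iff (g := ψ) Subtype.coe_injective]
    refine .pair ?_ ?_
    · rw [hfst]; exact (RingHom.id A).isIntegralElem_map
    · rw [hsnd]; exact H _ ⟨a, j, hj, rfl⟩
  · rintro H b ⟨a, j, hj, rfl⟩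
    have h := (H ⟨(a, f a + j), a, j, hj, rfl⟩).map ((RingHom.snd A B).comp ψ)
    rwa [RingHom.comp_assoc, hsnd] at h
end
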